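/- Let A be Hermitian with A² = 1, θ ∈ [0, π/2], λ = sin θ, K(a) = √((1 + λ·a·A)/2) for a = ±1. Then for any matrix ρ: K(1)*ρ*K(1) + K(-1)*ρ*K(-1) = ρ - g•[A,[A,ρ]] where g = sin²(θ/2)/2 = (1 - √(1-λ²))/4. -/

import Mathlib

open ComplexOrder

namespace Matrix.PosSemidef

/-- The positive semidefinite square root of a positive semidefinite matrix
(restored with its Mathlib (Dec 2024) definition; removed from current Mathlib). -/
noncomputable def sqrt {n 𝕜 : Type*} [Fintype n] [RCLike 𝕜] [DecidableEq n]
    {A : Matrix n n 𝕜} (hA : A.PosSemidef) : Matrix n n 𝕜 :=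
  hA.1.eigenvectorUnitary.1 * Matrix.diagonal ((↑) ∘ (√·) ∘ hA.1.eigenvalues) *
    (star hA.1.eigenvectorUnitary : Matrix n n 𝕜)

end Matrix.PosSemidef

private lemma smul_psd {n : ℕ} {M : Matrix (Fin n) (Fin n) ℂ} (hM : M.PosSemidef)
    {c : ℝ} (hc : 0 ≤ c) : ((c : ℂ) • M).PosSemidef := by
  exact hM.smul (Complex.zero_le_real.mpr hc)

private lemma one_add_psd {n : ℕ} {A : Matrix (Fin n) (Fin n) ℂ} (hA : A.IsHermitian)
    (hA2 : A * A = 1) : ((1 : Matrix (Fin n) (Fin n) ℂ) + A).PosSemidef := by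
  have key : (1 + A).conjTranspose * (1 + A) = (2:ℂ) • (1 + A) := by
    rw [Matrix.conjTranspose_add, Matrix.conjTranspose_one, hA.eq]
    rw [Matrix.add_mul, Matrix.mul_add, Matrix.mul_add, hA2]
    simp only [Matrix.one_mul, Matrix.mul_one]
    module
  have h : (1 + A) = ((1/2 : ℝ) : ℂ) • ((1 + A).conjTranspose * (1 + A)) := by
    rw [key, smul_smul]
    norm_num
  rw [h]
  exact smul_psd (Matrix.posSemidef_conjTranspose_mul_self _) (by norm_num)

private lemma comb_psd {n : ℕ} {A : Matrix (Fin n) (Fin n) ℂ} (hA : A.IsHermitian)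
    (hA2 : A * A = 1) {α β : ℝ} (hβ : 0 ≤ β) (hαβ : β ≤ α) :
    ((α : ℂ) • (1 : Matrix (Fin n) (Fin n) ℂ) + (β : ℂ) • A).PosSemidef := by
  have h : (α : ℂ) • (1 : Matrix (Fin n) (Fin n) ℂ) + (β : ℂ) • A
      = ((α - β : ℝ) : ℂ) • (1 : Matrix (Fin n) (Fin n) ℂ) + (β : ℂ) • (1 + A) := by
    push_cast; module
  rw [h]
  exact (smul_psd Matrix.PosSemidef.one (by linarith)).add
    (smul_psd (one_add_psd hA hA2) hβ)

open scoped MatrixOrder in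
private lemma psd_sqrt_eq_cfc {n : ℕ} {M : Matrix (Fin n) (Fin n) ℂ} (hM : M.PosSemidef) :
    hM.sqrt = CFC.sqrt M := by
  rw [CFC.sqrt_eq_cfc, cfc_nnreal_eq_real _ M hM.nonneg, hM.1.cfc_eq, Matrix.IsHermitian.cfc,
    Matrix.PosSemidef.sqrt, Unitary.conjStarAlgAut_apply]
  congr 3
  funext i
  simp [Real.coe_sqrt, Real.coe_toNNReal _ (hM.eigenvalues_nonneg i)]
  rw [max_eq_left (hM.eigenvalues_nonneg i)]

open scoped MatrixOrder in
private lemma psd_eq_sqrt_of_sq_eq {n : ℕ} {K M : Matrix (Fin n) (Fin n) ℂ} (hK : K.PosSemidef)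
    (hM : M.PosSemidef) (h : K ^ 2 = M) : K = hM.sqrt := by
  rw [psd_sqrt_eq_cfc]
  exact (CFC.sqrt_unique (by rw [← sq]; exact h) hK.nonneg).symm

theorem kraus_backaction_double_commutator
    {n : ℕ} (A : Matrix (Fin n) (Fin n) ℂ) (hA : A.IsHermitian) (hA2 : A * A = 1)
    (θ : ℝ) (hθ : θ ∈ Set.Icc 0 (Real.pi / 2))
    (hP : ∀ a : ℝ, a = 1 ∨ a = -1 →
      ((1 / 2 : ℂ) • ((1 : Matrix (Fin n) (Fin n) ℂ)
        + ((Real.sin θ * a : ℝ) : ℂ) • A)).PosSemidef) :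
    ∀ ρ : Matrix (Fin n) (Fin n) ℂ,
      (hP 1 (Or.inl rfl)).sqrt * ρ * (hP 1 (Or.inl rfl)).sqrt
        + (hP (-1) (Or.inr rfl)).sqrt * ρ * (hP (-1) (Or.inr rfl)).sqrt
      = ρ - ((Real.sin (θ / 2) ^ 2 / 2 : ℝ) : ℂ) •
          (A * (A * ρ - ρ * A) - (A * ρ - ρ * A) * A) := by
  intro ρ
  obtain ⟨hθ0, hθ1⟩ := hθ
  set c := Real.cos (θ / 2) with hc
  set s := Real.sin (θ / 2) with hs
  have hs0 : 0 ≤ s := Real.sin_nonneg_of_nonneg_of_le_pi (by linarith)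
    (by linarith [Real.pi_pos])
  have hsc : s ≤ c := by
    have h1 : s ≤ Real.sin (Real.pi / 4) :=
      Real.sin_le_sin_of_le_of_le_pi_div_two (by linarith [Real.pi_pos]) (by linarith) (by linarith)
    have h2 : Real.cos (Real.pi / 4) ≤ c :=
      Real.cos_le_cos_of_nonneg_of_le_pi (by linarith) (by linarith [Real.pi_pos]) (by linarith)
    rw [Real.sin_pi_div_four, ← Real.cos_pi_div_four] at h1
    linarith
  have hsqrt2 : (0:ℝ) < Real.sqrt 2 := Real.sqrt_pos.mpr (by norm_num)
  set α := c / Real.sqrt 2 with hα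
  set β := s / Real.sqrt 2 with hβdef
  have hβ0 : 0 ≤ β := div_nonneg hs0 hsqrt2.le
  have hαβ : β ≤ α := by rw [hα, hβdef]; gcongr
  have h2 : Real.sqrt 2 * Real.sqrt 2 = 2 := Real.mul_self_sqrt (by norm_num)
  have hcs : c ^ 2 + s ^ 2 = 1 := by rw [hc, hs]; exact Real.cos_sq_add_sin_sq _
  have hsin : Real.sin θ = 2 * (s * c) := by
    rw [hs, hc, show θ = 2 * (θ / 2) by ring, Real.sin_two_mul]; ring
  have e1 : α ^ 2 + β ^ 2 = 1 / 2 := by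
    rw [hα, hβdef, div_pow, div_pow, ← add_div, sq (Real.sqrt 2), h2, hcs]
  have e2 : 2 * (α * β) = Real.sin θ / 2 := by
    rw [hα, hβdef, hsin, div_mul_div_comm, h2]; ring
  set K₁ : Matrix (Fin n) (Fin n) ℂ := (α : ℂ) • 1 + (β : ℂ) • A with hK₁
  set K₂ : Matrix (Fin n) (Fin n) ℂ := (α : ℂ) • 1 + (β : ℂ) • (-A) with hK₂
  have hK₁psd : K₁.PosSemidef := comb_psd hA hA2 hβ0 hαβ
  have hK₂psd : K₂.PosSemidef := comb_psd hA.neg (by rw [Matrix.neg_mul, Matrix.mul_neg, neg_neg, hA2]) hβ0 hαβ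
  have hAl : ∀ X : Matrix (Fin n) (Fin n) ℂ, A * (A * X) = X := fun X => by
    rw [← Matrix.mul_assoc, hA2, Matrix.one_mul]
  have E1 : ((α : ℂ)) * α + (β : ℂ) * β = 1 / 2 := by
    have r : α * α + β * β = 1 / 2 := by nlinarith [e1]
    have := congrArg (Complex.ofReal) r
    push_cast at this
    linear_combination this
  have E2 : Complex.sin (θ : ℂ) = 2 * ((α : ℂ) * β) * 2 := by
    have r : Real.sin θ = 2 * (α * β) * 2 := by nlinarith [e2]
    have := congrArg (Complex.ofReal) r
    push_cast at this
    linear_combination this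
  have hsq1 : K₁ ^ 2 = (1 / 2 : ℂ) • ((1 : Matrix (Fin n) (Fin n) ℂ)
      + ((Real.sin θ * 1 : ℝ) : ℂ) • A) := by
    rw [hK₁, pow_two]
    simp only [Matrix.add_mul, Matrix.mul_add, Matrix.smul_mul, Matrix.mul_smul,
      smul_smul, Matrix.one_mul, Matrix.mul_one, hA2, smul_add]
    match_scalars
    · push_cast
      linear_combination E1
    · push_cast
      linear_combination (-(1/2) : ℂ) * E2
  have hsq2 : K₂ ^ 2 = (1 / 2 : ℂ) • ((1 : Matrix (Fin n) (Fin n) ℂ)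
      + ((Real.sin θ * (-1) : ℝ) : ℂ) • A) := by
    rw [hK₂, pow_two]
    simp only [Matrix.add_mul, Matrix.mul_add, Matrix.smul_mul, Matrix.mul_smul,
      smul_smul, Matrix.one_mul, Matrix.mul_one, Matrix.neg_mul, Matrix.mul_neg,
      smul_neg, neg_neg, hA2, smul_add]
    match_scalars
    · push_cast
      linear_combination E1
    · push_cast
      linear_combination ((1/2) : ℂ) * E2
  have hK₁eq : K₁ = (hP 1 (Or.inl rfl)).sqrt :=
    psd_eq_sqrt_of_sq_eq hK₁psd (hP 1 (Or.inl rfl)) hsq1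
  have hK₂eq : K₂ = (hP (-1) (Or.inr rfl)).sqrt :=
    psd_eq_sqrt_of_sq_eq hK₂psd (hP (-1) (Or.inr rfl)) hsq2
  rw [← hK₁eq, ← hK₂eq, hK₁, hK₂]
  simp only [Matrix.add_mul, Matrix.mul_add, Matrix.smul_mul, Matrix.mul_smul,
    smul_smul, Matrix.one_mul, Matrix.mul_one, Matrix.neg_mul, Matrix.mul_neg,
    smul_neg, Matrix.mul_sub, Matrix.sub_mul, smul_sub, Matrix.mul_assoc, hA2, hAl]
  have ES : Complex.sin ((θ : ℂ) / 2) = ((s : ℝ) : ℂ) := by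
    have := congrArg (Complex.ofReal) hs.symm
    push_cast at this
    linear_combination this
  have Eβ : ((β : ℝ) : ℂ) ^ 2 = ((s : ℝ) : ℂ) ^ 2 / 2 := by
    have r : β ^ 2 = s ^ 2 / 2 := by rw [hβdef, div_pow, sq (Real.sqrt 2), h2]
    have := congrArg (Complex.ofReal) r
    push_cast at this
    linear_combination this
  have Eα : ((α : ℝ) : ℂ) ^ 2 = (1 - ((s : ℝ) : ℂ) ^ 2) / 2 := by
    have r : α ^ 2 = (1 - s ^ 2) / 2 := by
      rw [hα, div_pow, sq (Real.sqrt 2), h2]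
      nlinarith [hcs]
    have := congrArg (Complex.ofReal) r
    push_cast at this
    linear_combination this
  match_scalars
  all_goals push_cast
  all_goals try simp only [ES]
  all_goals first
    | ring1
    | linear_combination 2 * Eα
    | linear_combination 2 * Eβ
    | linear_combination 2 * Eα + 2 * Eβ
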